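/- For every integer n, the polynomials f_{n+1}(u) - f_n(u) and f_{n+1}(u) + f_n(u) are both separable (have no repeated roots over ℂ). -/

import Mathlib

/-!
With `S` the rescaled Chebyshev polynomials of the second kind, the recursion forces
`f n = S (n - 1)`, so the two polynomials are `S n ∓ S (n - 1)`. Substituting `X ^ 2 - 2`
turns `S n + S (n - 1)` into `S (2 * n)` (with `X = t + t⁻¹`, both are
`(t ^ (2n+1) - t ^ (-2n-1)) / (t - t⁻¹)`), and `S m` is separable for `m ≠ -1` because
`U m` has the `m` distinct real roots `cos (kπ / (m + 1))`, `1 ≤ k ≤ m`. Substituting `-X`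
turns `S n - S (n - 1)` into `±(S n + S (n - 1))`. Separability descends along composition
with a non-constant `q`: a common factor `d` of `p` and `p'` yields the common factor
`d.comp q` of `p.comp q` and `(p.comp q)' = q' * p'.comp q`.
-/

open Polynomial Polynomial.Chebyshev

namespace Polynomial

variable {K : Type*} [Field K]

theorem isUnit_of_isUnit_comp {p q : K[X]} (hq : 0 < q.natDegree) (h : IsUnit (p.comp q)) :
    IsUnit p := by
  have hp : p ≠ 0 := by rintro rfl; simp at h
  have hdeg : p.natDegree * q.natDegree = 0 := by
    rw [← natDegree_comp]
    exact natDegree_eq_zero_of_isUnit h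
  rw [isUnit_iff_degree_eq_zero, degree_eq_natDegree hp,
    (mul_eq_zero.mp hdeg).resolve_right hq.ne', Nat.cast_zero]

theorem isCoprime_of_isCoprime_comp {p r q : K[X]} (hq : 0 < q.natDegree)
    (h : IsCoprime (p.comp q) (r.comp q)) : IsCoprime p r := by
  refine EuclideanDomain.isCoprime_of_dvd ?_ fun d hd _ hdp hdr => hd ?_
  · rintro ⟨rfl, rfl⟩
    simp [isCoprime_zero_left] at h
  · exact isUnit_of_isUnit_comp hq
      (h.isUnit_of_dvd' (_root_.map_dvd (compRingHom q) hdp) (_root_.map_dvd (compRingHom q) hdr))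

theorem Separable.of_comp {p q : K[X]} (hq : 0 < q.natDegree) (h : (p.comp q).Separable) :
    p.Separable := by
  rw [Separable, derivative_comp, mul_comm] at h
  exact isCoprime_of_isCoprime_comp hq h.of_mul_right_left

end Polynomial

theorem Int.eq_of_recurrence {A : Type*} [Ring A] {a b : ℤ → A} (c : A)
    (ha : ∀ n, a (n - 1) + a (n + 1) = c * a n) (hb : ∀ n, b (n - 1) + b (n + 1) = c * b n)
    (h0 : a 0 = b 0) (h1 : a 1 = b 1) : a = b := by
  funext n
  induction n using Chebyshev.induct with
  | zero => exact h0
  | one => exact h1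
  | add_two n ih1 ih0 =>
    have ha' := ha (n + 1)
    have hb' := hb (n + 1)
    rw [add_sub_cancel_right, add_assoc, one_add_one_eq_two] at ha' hb'
    rw [eq_sub_of_add_eq' ha', eq_sub_of_add_eq' hb', ih1, ih0]
  | neg_add_one n ih0 ih1 =>
    rw [eq_sub_of_add_eq (ha (-n)), eq_sub_of_add_eq (hb (-n)), ih0, ih1]

namespace Polynomial.Chebyshev

section

variable (R : Type*) [CommRing R]

theorem S_sub_one_add_S_add_one (n : ℤ) : S R (n - 1) + S R (n + 1) = X * S R n := by
  rw [S_add_one]; ring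

theorem S_sub_two_add_S_add_two (n : ℤ) : S R (n - 2) + S R (n + 2) = (X ^ 2 - 2) * S R n := by
  have hlo := S_sub_one_add_S_add_one R (n - 1)
  have hhi := S_sub_one_add_S_add_one R (n + 1)
  rw [sub_sub, one_add_one_eq_two, sub_add_cancel] at hlo
  rw [add_sub_cancel_right, add_assoc, one_add_one_eq_two] at hhi
  linear_combination hlo + hhi + X * S_sub_one_add_S_add_one R n

theorem eq_S_sub_one_of_recurrence (f : ℤ → R[X]) (h0 : f 0 = 0) (h1 : f 1 = 1)
    (hrec : ∀ n, f (n - 1) + f (n + 1) = X * f n) : f = fun n ↦ S R (n - 1) := by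
  refine Int.eq_of_recurrence X hrec (fun n ↦ ?_) (by simpa using h0) (by simpa using h1)
  rw [add_sub_cancel_right, ← S_sub_one_add_S_add_one, sub_add_cancel]

theorem S_comp_neg_X (n : ℤ) : (S R n).comp (-X) = ((n.negOnePow : ℤ) : R[X]) * S R n := by
  refine congrFun (Int.eq_of_recurrence (a := fun n ↦ (S R n).comp (-X))
    (b := fun n ↦ ((n.negOnePow : ℤ) : R[X]) * S R n) (-X) (fun n ↦ ?_) (fun n ↦ ?_)
    (by simp) (by simp)) n
  · rw [← add_comp, S_sub_one_add_S_add_one, mul_comp, X_comp]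
  · simp only [Int.negOnePow_sub, Int.negOnePow_add, Int.negOnePow_one]
    push_cast
    linear_combination (-(n.negOnePow : R[X])) * S_sub_one_add_S_add_one R n

theorem S_sub_S_sub_one_comp_neg_X (n : ℤ) :
    (S R n - S R (n - 1)).comp (-X) = ((n.negOnePow : ℤ) : R[X]) * (S R n + S R (n - 1)) := by
  rw [sub_comp, S_comp_neg_X, S_comp_neg_X, Int.negOnePow_sub, Int.negOnePow_one]
  push_cast
  ring

theorem S_add_S_sub_one_comp (n : ℤ) :
    (S R n + S R (n - 1)).comp (X ^ 2 - 2) = S R (2 * n) := by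
  refine congrFun (Int.eq_of_recurrence (a := fun n ↦ (S R n + S R (n - 1)).comp (X ^ 2 - 2))
    (b := fun n ↦ S R (2 * n)) (X ^ 2 - 2) (fun n ↦ ?_) (fun n ↦ ?_) (by simp) ?_) n
  · have hprev := S_sub_one_add_S_add_one R (n - 1)
    rw [sub_add_cancel] at hprev
    have hP : S R (n - 1) + S R (n - 1 - 1) + (S R (n + 1) + S R n) =
        X * (S R n + S R (n - 1)) := by
      linear_combination hprev + S_sub_one_add_S_add_one R n
    rw [← add_comp, add_sub_cancel_right, hP, mul_comp, X_comp]
  · rw [mul_sub, mul_add, mul_one]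
    exact S_sub_two_add_S_add_two R (2 * n)
  · simp [S_two]
    ring

end

theorem separable_U_real (n : ℕ) : (U ℝ n).Separable := by
  have hinj := (Finset.range n).nodup_map_iff_injOn.mp (roots_U_real_nodup n)
  have hsplit : (U ℝ n).Splits := by
    rw [splits_iff_card_roots, roots_U_real, Finset.card_val, Finset.card_image_of_injOn hinj,
      Finset.card_range, natDegree_U_natCast]
  refine (nodup_roots_iff_of_splits (U_ne_zero ℝ n (by omega)) hsplit).mp ?_
  rw [roots_U_real]
  exact Finset.nodup _

variable (K : Type*) [Field K] [CharZero K]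

theorem separable_S {m : ℤ} (hm : m ≠ -1) : (S K m).Separable := by
  have hnat (k : ℕ) : (S K k).Separable := by
    have hU : (U ℚ k).Separable := by
      rw [← separable_map (algebraMap ℚ ℝ), map_U]
      exact separable_U_real k
    refine .of_comp (q := 2 * X) (by simp) ?_
    rw [S_comp_two_mul_X, ← map_U (algebraMap ℚ K)]
    exact hU.map
  rcases le_or_gt 0 m with hm0 | hm0
  · lift m to ℕ using hm0
    exact hnat m
  · obtain ⟨k, hk⟩ : ∃ k : ℕ, m = -k - 2 := ⟨(-m - 2).toNat, by omega⟩
    rw [hk, S_neg_sub_two, ← neg_one_mul]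
    exact (hnat k).unit_mul isUnit_one.neg

theorem separable_S_add_S_sub_one (n : ℤ) : (S K n + S K (n - 1)).Separable :=
  .of_comp (q := X ^ 2 - 2)
    (by rw [show (X ^ 2 - 2 : K[X]).natDegree = 2 by compute_degree!]; norm_num) <| by
    rw [S_add_S_sub_one_comp]
    exact separable_S K (by omega)

theorem separable_S_sub_S_sub_one (n : ℤ) : (S K n - S K (n - 1)).Separable :=
  .of_comp (q := -X) (by simp) <| by
    rw [S_sub_S_sub_one_comp_neg_X]
    exact Separable.unit_mul (n.negOnePow.isUnit.map (Int.castRingHom K[X]))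
      (separable_S_add_S_sub_one K n)

end Polynomial.Chebyshev

theorem stmt_13 (f : ℤ → Polynomial ℤ) (h0 : f 0 = 0) (h1 : f 1 = 1)
    (hrec : ∀ n : ℤ, f (n - 1) + f (n + 1) = X * f n) (n : ℤ) :
    ((f (n + 1) - f n).map (Int.castRingHom ℂ)).Separable ∧
    ((f (n + 1) + f n).map (Int.castRingHom ℂ)).Separable := by
  obtain rfl : f = fun n ↦ S ℤ (n - 1) := eq_S_sub_one_of_recurrence ℤ f h0 h1 hrec
  simp only [add_sub_cancel_right, Polynomial.map_sub, Polynomial.map_add, map_S]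
  exact ⟨separable_S_sub_S_sub_one ℂ n, separable_S_add_S_sub_one ℂ n⟩
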